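/- arXiv:1806.11387 — 4 statements merged into one kernel-verified Lean document; each statement's English description precedes it below -/
import Mathlib

section
/- Let S_0 = {y ∈ F_q^d : ‖y‖ = 0} with d = 4k+2 for some k ∈ ℕ, k ≥ 1, and q ≡ 3 mod 4. Then for every α ∈ F_q^d, (1_{S_0})^∨(α) := q^{−d} Σ_{y ∈ S_0} χ(α·y) = q^{−1} δ_0(α) − q^{−(d+2)/2} Σ_{r ∈ F_q^*} χ(r‖α‖), where δ_0(α) = 1 if α = 0 and 0 otherwise. -/
/-!
Summing over `r` detects the sphere: `q · Σ_{y ∈ S_0} χ(α·y) = Σ_r Σ_y χ(r‖y‖ + α·y)`.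
The term `r = 0` is `q^d δ_0(α)`. For `r ≠ 0` the sum over `y` factors over the coordinates, and
completing the square turns each factor into `χ(-α_i² / 4r)` times the quadratic Gauss sum
`Σ_t χ(r t²)`. Its square is `η(-1) q` for every `r`, with `η` the quadratic character, and
`η(-1) = -1` as `q ≡ 3 mod 4`.
For `d = 2(2k+1)` the `r`-th term is therefore `-q^{2k+1} χ(-‖α‖ / 4r)`, and `r ↦ -1/(4r)` permutes
`F^*`.
-/
open Finset

lemma four_ne_zero_of_two_ne_zero {K : Type*} [Semiring K] [NoZeroDivisors K] (h2 : (2 : K) ≠ 0) :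
    (4 : K) ≠ 0 := by
  simpa [show (4 : K) = 2 * 2 by norm_num] using h2

lemma AddChar.map_sum_eq_prod {A M ι : Type*} [AddCommMonoid A] [CommMonoid M] (ψ : AddChar A M)
    (s : Finset ι) (f : ι → A) : ψ (∑ i ∈ s, f i) = ∏ i ∈ s, ψ (f i) := by
  classical
  induction s using Finset.induction_on with
  | empty => simp
  | insert a s ha ih => rw [sum_insert ha, prod_insert ha, map_add_eq_mul, ih]

section CompletingTheSquare

variable {F R : Type*} [Field F] [CommRing R]

lemma neg_inv_four_mul_involutive (h2 : (2 : F) ≠ 0) :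
    Function.Involutive (fun r : F => -(4 * r)⁻¹) := by
  have h4 := four_ne_zero_of_two_ne_zero h2
  intro r
  simp only [mul_neg, inv_neg, neg_neg, mul_inv, inv_inv]
  field_simp

variable [Fintype F]

lemma sum_sdiff_zero_comp_neg_inv_four_mul [DecidableEq F] (h2 : (2 : F) ≠ 0) (f : F → R) :
    ∑ r ∈ univ \ {0}, f (-(4 * r)⁻¹) = ∑ r ∈ univ \ {0}, f r := by
  have hinv := neg_inv_four_mul_involutive h2
  have hmem (r : F) (hr : r ∈ univ \ {0}) : -(4 * r)⁻¹ ∈ univ \ {0} := by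
    simp only [mem_sdiff, mem_univ, mem_singleton, true_and] at hr ⊢
    contrapose! hr
    calc r = -(4 * -(4 * r)⁻¹)⁻¹ := (hinv r).symm
      _ = 0 := by rw [hr, mul_zero, inv_zero, neg_zero]
  exact sum_nbij' (fun r => -(4 * r)⁻¹) (fun r => -(4 * r)⁻¹) hmem hmem (fun r _ => hinv r)
    (fun r _ => hinv r) (fun _ _ => rfl)

lemma AddChar.sum_mul_sq_add_mul (h2 : (2 : F) ≠ 0) (ψ : AddChar F R) {r : F} (hr : r ≠ 0)
    (c : F) : ∑ t, ψ (r * t ^ 2 + c * t) = ψ (-(4 * r)⁻¹ * c ^ 2) * ∑ t, ψ (r * t ^ 2) := by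
  have h4 := four_ne_zero_of_two_ne_zero h2
  have hsquare (s : F) : r * (s - c * (2 * r)⁻¹) ^ 2 + c * (s - c * (2 * r)⁻¹) =
      -(4 * r)⁻¹ * c ^ 2 + r * s ^ 2 := by
    field_simp
    ring
  rw [mul_sum, ← (Equiv.subRight (c * (2 * r)⁻¹)).sum_comp]
  simp only [Equiv.subRight_apply, hsquare, map_add_eq_mul]

lemma AddChar.sum_mul_dotProduct_self_add_dotProduct (h2 : (2 : F) ≠ 0) (ψ : AddChar F R)
    {r : F} (hr : r ≠ 0) {ι : Type*} [Fintype ι] [DecidableEq ι] (α : ι → F) :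
    ∑ y : ι → F, ψ (r * (y ⬝ᵥ y) + α ⬝ᵥ y) =
      ψ (-(4 * r)⁻¹ * (α ⬝ᵥ α)) * (∑ t, ψ (r * t ^ 2)) ^ Fintype.card ι := by
  have hsplit (v w : ι → F) (s : F) : s * (v ⬝ᵥ w) = ∑ i, s * (v i * w i) := mul_sum _ _ _
  simp_rw [hsplit, dotProduct, ← sum_add_distrib, ψ.map_sum_eq_prod,
    ← Fintype.prod_sum (fun i t => ψ (r * (t * t) + α i * t)), ← sq,
    ψ.sum_mul_sq_add_mul h2 hr, prod_mul_distrib, prod_const, card_univ]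

end CompletingTheSquare

section GaussSum

variable {F R : Type*} [Field F] [Fintype F] [DecidableEq F] [CommRing R]

lemma sum_comp_sq (hF : ringChar F ≠ 2) (f : F → R) :
    ∑ t, f (t ^ 2) = ∑ x, ((quadraticChar F x : R) + 1) * f x := by
  rw [← sum_fiberwise univ (· ^ 2)]
  refine sum_congr rfl fun x _ => ?_
  have hcard := quadraticChar_card_sqrts hF x
  rw [Set.toFinset_ofPred] at hcard
  rw [sum_congr rfl fun t ht => by rw [(mem_filter.mp ht).2], sum_const, nsmul_eq_mul]
  congr 1
  exact_mod_cast congrArg (Int.cast : ℤ → R) hcard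

variable [IsDomain R]

lemma AddChar.sum_apply_sq_eq_gaussSum (hF : ringChar F ≠ 2) {ψ : AddChar F R} (hψ : ψ ≠ 1) :
    ∑ t, ψ (t ^ 2) = gaussSum ((quadraticChar F).ringHomComp (Int.castRingHom R)) ψ := by
  rw [sum_comp_sq hF, gaussSum]
  simp only [add_mul, one_mul, sum_add_distrib, sum_eq_zero_of_ne_one hψ, add_zero]
  rfl

lemma AddChar.sq_sum_apply_sq [CharZero R] (hF : ringChar F ≠ 2) {ψ : AddChar F R} (hψ : ψ ≠ 1) :
    (∑ t, ψ (t ^ 2)) ^ 2 = quadraticChar F (-1) * Fintype.card F := by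
  rw [ψ.sum_apply_sq_eq_gaussSum hF hψ, gaussSum_sq _ ((quadraticChar_isQuadratic F).comp _)
    (IsPrimitive.of_ne_one hψ)]
  · rfl
  · exact fun h => quadraticChar_ne_one hF
      ((MulChar.ringHomComp_eq_one_iff (Int.cast_injective (α := R))).mp h)

end GaussSum

def zeroSphere (ι F : Type*) [Fintype ι] [DecidableEq ι] [Semiring F] [Fintype F] [DecidableEq F] :
    Finset (ι → F) :=
  univ.filter fun y => y ⬝ᵥ y = 0

section ZeroSphere

variable {F R : Type*} [Field F] [Fintype F] [DecidableEq F] [CommRing R] [IsDomain R]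

lemma AddChar.card_mul_sum_filter_eq_zero {ψ : AddChar F R} (hψ : ψ ≠ 1)
    {V : Type*} [Fintype V] (Q : V → F) (g : V → R) :
    Fintype.card F * ∑ y ∈ univ.filter (fun y => Q y = 0), g y =
      ∑ r : F, ∑ y, ψ (r * Q y) * g y := by
  rw [sum_comm, mul_sum, sum_filter]
  refine sum_congr rfl fun y _ => ?_
  rw [← sum_mul, AddChar.sum_mulShift _ (AddChar.IsPrimitive.of_ne_one hψ)]
  split_ifs <;> simp

variable {ι : Type*} [Fintype ι] [DecidableEq ι]

lemma AddChar.sum_dotProduct {ψ : AddChar F R} (hψ : ψ ≠ 1) (α : ι → F) :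
    ∑ y : ι → F, ψ (α ⬝ᵥ y) = if α = 0 then (Fintype.card F : R) ^ Fintype.card ι else 0 := by
  simp_rw [dotProduct, ψ.map_sum_eq_prod, ← Fintype.prod_sum (fun i t => ψ (α i * t)),
    mul_comm (α _), AddChar.sum_mulShift _ (AddChar.IsPrimitive.of_ne_one hψ)]
  split_ifs with hα
  · simp [hα]
  · obtain ⟨i, hi⟩ : ∃ i, α i ≠ 0 := Function.ne_iff.mp hα
    exact prod_eq_zero (mem_univ i) (by simp [hi])

theorem AddChar.card_mul_sum_zeroSphere [CharZero R] (hF : ringChar F ≠ 2) {ψ : AddChar F R}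
    (hψ : ψ ≠ 1) {m : ℕ} (hι : Fintype.card ι = 2 * m) (α : ι → F) :
    Fintype.card F * ∑ y ∈ zeroSphere ι F, ψ (α ⬝ᵥ y) =
      (if α = 0 then (Fintype.card F : R) ^ (2 * m) else 0) +
        (quadraticChar F (-1) * Fintype.card F) ^ m * ∑ r ∈ univ \ {0}, ψ (r * (α ⬝ᵥ α)) := by
  have h2 : (2 : F) ≠ 0 := Ring.two_ne_zero hF
  have hgauss (r : F) (hr : r ≠ 0) : (∑ t, ψ (r * t ^ 2)) ^ Fintype.card ι =
      (quadraticChar F (-1) * Fintype.card F) ^ m := by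
    -- `t ↦ ψ (r * t)` is again nontrivial, so its quadratic Gauss sum also squares to `η(-1) q`.
    rw [hι, pow_mul, ← (ψ.mulShift r).sq_sum_apply_sq hF ?_]
    · simp
    · exact IsPrimitive.of_ne_one hψ hr
  rw [zeroSphere, ψ.card_mul_sum_filter_eq_zero hψ,
    sum_eq_add_sum_sdiff_singleton_of_mem (mem_univ 0)]
  simp_rw [← map_add_eq_mul]
  congr 1
  · simp only [zero_mul, zero_add, ψ.sum_dotProduct hψ, hι]
  rw [← sum_sdiff_zero_comp_neg_inv_four_mul h2 fun r => ψ (r * (α ⬝ᵥ α)), mul_sum]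
  refine sum_congr rfl fun r hr => ?_
  have hr : r ≠ 0 := by simpa using hr
  rw [ψ.sum_mul_dotProduct_self_add_dotProduct h2 hr, hgauss r hr, mul_comm]

end ZeroSphere

theorem inv_fourier_zero_sphere_general
    (F : Type) [Field F] [Fintype F] [DecidableEq F]
    (hq : Fintype.card F % 4 = 3)
    (χ : AddChar F ℂ) (hχ : χ ≠ 1) (k : ℕ)
    (α : Fin (4 * k + 2) → F) :
    ((Fintype.card F : ℂ) ^ (4 * k + 2))⁻¹ *
        ∑ y ∈ Finset.univ.filter (fun y : Fin (4 * k + 2) → F => ∑ i, y i * y i = 0),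
          χ (∑ i, α i * y i) =
      (if α = 0 then ((Fintype.card F : ℂ))⁻¹ else 0) -
        ((Fintype.card F : ℂ) ^ (2 * k + 2))⁻¹ *
          ∑ r ∈ (Finset.univ : Finset F) \ {0}, χ (r * ∑ i, α i * α i) := by
  change _ * ∑ y ∈ zeroSphere _ F, χ (α ⬝ᵥ y) = _ - _ * ∑ r ∈ _, χ (r * (α ⬝ᵥ α))
  have hF : ringChar F ≠ 2 := fun h => by
    have := FiniteField.even_card_of_char_two h
    omega
  have hη : quadraticChar F (-1) = -1 := quadraticChar_neg_one_iff_not_isSquare.mpr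
    (FiniteField.isSquare_neg_one_iff.not.mpr (not_not.mpr hq))
  have hq0 : (Fintype.card F : ℂ) ≠ 0 := Nat.cast_ne_zero.mpr Fintype.card_ne_zero
  have key := χ.card_mul_sum_zeroSphere hF hχ (m := 2 * k + 1) (by simp; ring) α
  rw [hη, Int.cast_neg, Int.cast_one, neg_one_mul, Odd.neg_pow ⟨k, rfl⟩] at key
  rw [(eq_inv_mul_iff_mul_eq₀ hq0).mpr key]
  generalize ∑ r ∈ univ \ {0}, χ (r * (α ⬝ᵥ α)) = T
  split_ifs <;> field_simp <;> ring

/-- Explicit formula for the inverse Fourier transform of the indicator of the zero-radius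
sphere `S_0 ⊂ F_q^d` when `d = 4k+2`, `k ≥ 1`, and `q ≡ 3 mod 4`:
`(1_{S_0})^∨(α) = q^{−1} δ_0(α) − q^{−(d+2)/2} Σ_{r ≠ 0} χ(r‖α‖)`. -/
theorem inv_fourier_zero_sphere
    (F : Type) [Field F] [Fintype F] [DecidableEq F]
    (hq : Fintype.card F % 4 = 3)
    (χ : AddChar F ℂ) (hχ : χ ≠ 1) (k : ℕ) (hk : 1 ≤ k)
    (α : Fin (4 * k + 2) → F) :
    ((Fintype.card F : ℂ) ^ (4 * k + 2))⁻¹ *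
        ∑ y ∈ Finset.univ.filter (fun y : Fin (4 * k + 2) → F => ∑ i, y i * y i = 0),
          χ (∑ i, α i * y i) =
      (if α = 0 then ((Fintype.card F : ℂ))⁻¹ else 0) -
        ((Fintype.card F : ℂ) ^ (2 * k + 2))⁻¹ *
          ∑ r ∈ (Finset.univ : Finset F) \ {0}, χ (r * ∑ i, α i * α i) :=
  inv_fourier_zero_sphere_general F hq χ hχ k α
end

section
/- Assume d = 4k+2 (k ≥ 1), q ≡ 3 mod 4, and let S_0 ⊂ F_q^d be the zero-radius sphere. Then for any G ⊂ F_q^d, the quantity q^{−1}|G|² − q^{−(d+2)/2}(q−1) Σ_{‖x‖=0} |1̂_G(x)|² + q^{−(d+2)/2} Σ_{‖x‖≠0} |1̂_G(x)|² equals the number of pairs (m, m') ∈ G × G with m − m' ∈ S_0, and in particular is nonnegative. -/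
open Finset

/-!
Expanding `|1̂_G(x)|²` as a sum over pairs `(m, m')` turns the left-hand side into
`∑_{(m, m') ∈ G × G} K(m - m')` for an explicit kernel `K`, so it suffices to show that `K` is
the indicator of `S_0`. Writing `q · 1[‖x‖ = 0] = ∑_s χ(s‖x‖)` and completing the square in each
coordinate gives the Fourier transform of the zero sphere,
`q ∑_{x ∈ S_0} χ(-x·y) = q^d δ_0(y) + g^d (q · 1[‖y‖ = 0] - 1)`, with `g` the quadratic Gauss
sum. Since `q ≡ 3 mod 4` we have `g² = -q`, and since `d/2 = 2k+1` is odd, `g^d = -q^{d/2}`;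
with this sign the three terms of `K` collapse to `1[‖y‖ = 0]`.
-/

namespace AddChar

lemma map_sum_eq_prod_s11 {A R ι : Type*} [AddCommMonoid A] [CommMonoid R] (ψ : AddChar A R)
    (s : Finset ι) (f : ι → A) :
    ψ (∑ i ∈ s, f i) = ∏ i ∈ s, ψ (f i) := by
  induction s using Finset.cons_induction with
  | empty => simp
  | cons a s _ ih => rw [sum_cons, prod_cons, map_add_eq_mul, ih]

lemma sum_pi_map_sum_eq_prod_sum {A R ι : Type*} [AddCommMonoid A] [Fintype A] [CommSemiring R]
    [Fintype ι] [DecidableEq ι] (ψ : AddChar A R) (g : ι → A → A) :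
    ∑ x : ι → A, ψ (∑ i, g i (x i)) = ∏ i, ∑ t, ψ (g i t) := by
  simp only [map_sum_eq_prod_s11, Fintype.prod_sum]

lemma sq_norm_sum_eq_sum_product {A M : Type*} [AddCommGroup A] [Finite A]
    (ψ : AddChar A ℂ) (G : Finset M) (a : M → A) :
    ((‖∑ m ∈ G, ψ (a m)‖ : ℝ) : ℂ) ^ 2 = ∑ p ∈ G ×ˢ G, ψ (a p.1 - a p.2) := by
  rw [← Complex.mul_conj', map_sum, sum_mul_sum, sum_product]
  simp only [← ψ.map_neg_eq_conj, ← ψ.map_add_eq_mul, sub_eq_add_neg]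

end AddChar

section Orthogonality

variable {F : Type*} [Field F] [Fintype F] [DecidableEq F] {ι : Type*} [Fintype ι]
  [DecidableEq ι] {R : Type*} [CommRing R] [IsDomain R] {ψ : AddChar F R}

lemma sum_addChar_dotProduct (hψ : ψ ≠ 1) (y : ι → F) :
    ∑ x : ι → F, ψ (x ⬝ᵥ y) = if y = 0 then (Fintype.card F : R) ^ Fintype.card ι else 0 := by
  simp only [dotProduct, AddChar.sum_pi_map_sum_eq_prod_sum ψ (fun i t => t * y i),
    AddChar.sum_mulShift _ (AddChar.IsPrimitive.of_ne_one hψ), Nat.cast_ite, Nat.cast_zero,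
    prod_ite_zero, funext_iff]
  simp

lemma sum_erase_zero_addChar_mul_inv (hψ : ψ ≠ 1) (c : F) :
    ∑ s ∈ univ.erase 0, ψ (c * s⁻¹) = (if c = 0 then (Fintype.card F : R) else 0) - 1 := by
  have hinv : ∑ s, ψ (c * s⁻¹) = ∑ s, ψ (s * c) :=
    Fintype.sum_bijective _ inv_involutive.bijective _ _ fun s => by rw [mul_comm]
  rw [sum_erase_eq_sub (mem_univ 0), hinv,
    AddChar.sum_mulShift c (AddChar.IsPrimitive.of_ne_one hψ)]
  simp

end Orthogonality

section QuadraticGaussSum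

variable {F : Type*} [Field F] [Fintype F]

lemma ringChar_ne_two_of_card_mod_four_eq_three (hq : Fintype.card F % 4 = 3) :
    ringChar F ≠ 2 := fun h => by
  have := FiniteField.even_card_of_char_two h
  omega

variable [DecidableEq F]

variable (F) in
noncomputable def complexQuadraticChar : MulChar F ℂ :=
  (quadraticChar F).ringHomComp (Int.castRingHom ℂ)

@[simp]
lemma complexQuadraticChar_apply (a : F) : complexQuadraticChar F a = quadraticChar F a := rfl

lemma complexQuadraticChar_mul_self {a : F} (ha : a ≠ 0) :
    complexQuadraticChar F a * complexQuadraticChar F a = 1 := by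
  rw [complexQuadraticChar_apply, ← Int.cast_mul, ← sq, quadraticChar_sq_one ha, Int.cast_one]

lemma complexQuadraticChar_isQuadratic : (complexQuadraticChar F).IsQuadratic :=
  (quadraticChar_isQuadratic F).comp _

lemma complexQuadraticChar_ne_one (hF : ringChar F ≠ 2) : complexQuadraticChar F ≠ 1 :=
  (MulChar.ringHomComp_ne_one_iff (RingHom.injective_int _)).mpr (quadraticChar_ne_one hF)

lemma gaussSum_complexQuadraticChar_sq (hq : Fintype.card F % 4 = 3) {ψ : AddChar F ℂ}
    (hψ : ψ ≠ 1) : gaussSum (complexQuadraticChar F) ψ ^ 2 = -(Fintype.card F : ℂ) := by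
  have hF := ringChar_ne_two_of_card_mod_four_eq_three hq
  rw [gaussSum_sq (complexQuadraticChar_ne_one hF) complexQuadraticChar_isQuadratic
      (AddChar.IsPrimitive.of_ne_one hψ), complexQuadraticChar_apply,
    quadraticChar_neg_one_iff_not_isSquare.mpr
      (FiniteField.isSquare_neg_one_iff.not.mpr (by omega))]
  simp

lemma sum_addChar_mul_sq (hF : ringChar F ≠ 2) {ψ : AddChar F ℂ} (hψ : ψ ≠ 1) {s : F}
    (hs : s ≠ 0) :
    ∑ u, ψ (s * u ^ 2) = complexQuadraticChar F s * gaussSum (complexQuadraticChar F) ψ := by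
  have hfiber (v : F) : (#{u | u ^ 2 = v} : ℂ) = complexQuadraticChar F v + 1 := by
    have := quadraticChar_card_sqrts hF v
    rw [Set.toFinset_ofPred] at this
    rw [complexQuadraticChar_apply]
    exact_mod_cast this
  calc ∑ u, ψ (s * u ^ 2)
      = ∑ v, (complexQuadraticChar F v + 1) * ψ (s * v) := by
        rw [← sum_fiberwise univ (· ^ 2)]
        refine sum_congr rfl fun v _ => ?_
        rw [← hfiber, ← nsmul_eq_mul, ← sum_const]
        exact sum_congr rfl fun u hu => by rw [(mem_filter.mp hu).2]
    _ = gaussSum (complexQuadraticChar F) (ψ.mulShift s) + ∑ v, ψ (v * s) := by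
        simp only [add_mul, one_mul, sum_add_distrib, gaussSum, AddChar.mulShift_apply,
          mul_comm s]
    _ = complexQuadraticChar F s * gaussSum (complexQuadraticChar F) ψ := by
        rw [AddChar.sum_mulShift s (AddChar.IsPrimitive.of_ne_one hψ), if_neg hs, Nat.cast_zero,
          add_zero, ← Units.val_mk0 hs, gaussSum_mulShift_eq, complexQuadraticChar_isQuadratic.inv]

lemma sum_addChar_quadratic (hF : ringChar F ≠ 2) {ψ : AddChar F ℂ} (hψ : ψ ≠ 1) {s : F}
    (hs : s ≠ 0) (b : F) :
    ∑ t, ψ (s * t ^ 2 + b * t) =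
      ψ (-b ^ 2 / (4 * s)) * (complexQuadraticChar F s * gaussSum (complexQuadraticChar F) ψ) := by
  have h2 : (2 : F) ≠ 0 := Ring.two_ne_zero hF
  have h4 : (4 : F) ≠ 0 := by simpa [show (4 : F) = 2 ^ 2 by norm_num] using h2
  have hsquare (t : F) : s * t ^ 2 + b * t = s * (t + b / (2 * s)) ^ 2 + -b ^ 2 / (4 * s) := by
    field_simp
    ring
  calc ∑ t, ψ (s * t ^ 2 + b * t) = ∑ u, ψ (s * u ^ 2 + -b ^ 2 / (4 * s)) :=
        Fintype.sum_equiv (Equiv.addRight (b / (2 * s))) _ _ fun t => by rw [hsquare]; rfl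
    _ = ψ (-b ^ 2 / (4 * s)) * ∑ u, ψ (s * u ^ 2) := by
        simp only [AddChar.map_add_eq_mul, mul_sum, mul_comm]
    _ = _ := by rw [sum_addChar_mul_sq hF hψ hs]

variable {ι : Type*} [Fintype ι] [DecidableEq ι]

lemma sum_addChar_quadForm (hF : ringChar F ≠ 2) {ψ : AddChar F ℂ} (hψ : ψ ≠ 1) {s : F}
    (hs : s ≠ 0) (hι : Even (Fintype.card ι)) (b : ι → F) :
    ∑ x : ι → F, ψ (s * (x ⬝ᵥ x) + x ⬝ᵥ b) =
      gaussSum (complexQuadraticChar F) ψ ^ Fintype.card ι * ψ (-(b ⬝ᵥ b) / (4 * s)) := by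
  have hsplit (x : ι → F) : s * (x ⬝ᵥ x) + x ⬝ᵥ b = ∑ i, (s * x i ^ 2 + b i * x i) := by
    simp only [dotProduct, mul_sum, sum_add_distrib, sq, mul_comm (x _) (b _)]
  have hsign : complexQuadraticChar F s ^ Fintype.card ι = 1 := by
    obtain ⟨m, hm⟩ := hι
    rw [hm, ← two_mul, pow_mul, sq, complexQuadraticChar_mul_self hs, one_pow]
  have hnorm : ∏ i, ψ (-b i ^ 2 / (4 * s)) = ψ (-(b ⬝ᵥ b) / (4 * s)) := by
    rw [← AddChar.map_sum_eq_prod_s11, dotProduct, ← sum_div, ← sum_neg_distrib]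
    simp only [sq]
  simp only [hsplit]
  rw [AddChar.sum_pi_map_sum_eq_prod_sum ψ (fun i t => s * t ^ 2 + b i * t)]
  simp only [sum_addChar_quadratic hF hψ hs]
  rw [prod_mul_distrib, prod_const, card_univ, mul_pow, hsign, one_mul, hnorm, mul_comm]

lemma card_mul_sum_zeroSphere_addChar (hF : ringChar F ≠ 2) {ψ : AddChar F ℂ} (hψ : ψ ≠ 1)
    (hι : Even (Fintype.card ι)) (y : ι → F) :
    (Fintype.card F : ℂ) * ∑ x ∈ {x : ι → F | x ⬝ᵥ x = 0}, ψ (-(x ⬝ᵥ y)) =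
      (if y = 0 then (Fintype.card F : ℂ) ^ Fintype.card ι else 0) +
        gaussSum (complexQuadraticChar F) ψ ^ Fintype.card ι *
          ((if y ⬝ᵥ y = 0 then (Fintype.card F : ℂ) else 0) - 1) := by
  have h4 : (4 : F) ≠ 0 := by
    simpa [show (4 : F) = 2 ^ 2 by norm_num] using Ring.two_ne_zero hF
  -- `q * 1[x ⬝ᵥ x = 0] = ∑ s, ψ (s * (x ⬝ᵥ x))`
  have hdetect : (Fintype.card F : ℂ) * ∑ x ∈ {x : ι → F | x ⬝ᵥ x = 0}, ψ (-(x ⬝ᵥ y)) =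
      ∑ s, ∑ x : ι → F, ψ (s * (x ⬝ᵥ x) + x ⬝ᵥ -y) := by
    rw [sum_comm, mul_sum, sum_filter]
    refine sum_congr rfl fun x _ => ?_
    simp only [AddChar.map_add_eq_mul, ← sum_mul, dotProduct_neg,
      AddChar.sum_mulShift _ (AddChar.IsPrimitive.of_ne_one hψ)]
    split_ifs <;> simp
  have hzero : ∑ x : ι → F, ψ (0 * (x ⬝ᵥ x) + x ⬝ᵥ -y) =
      if y = 0 then (Fintype.card F : ℂ) ^ Fintype.card ι else 0 := by
    simp only [zero_mul, zero_add, sum_addChar_dotProduct hψ, neg_eq_zero]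
  have hnonzero : ∑ s ∈ univ.erase 0, ∑ x : ι → F, ψ (s * (x ⬝ᵥ x) + x ⬝ᵥ -y) =
      gaussSum (complexQuadraticChar F) ψ ^ Fintype.card ι *
        ((if y ⬝ᵥ y = 0 then (Fintype.card F : ℂ) else 0) - 1) := by
    rw [sum_congr rfl fun s hs => sum_addChar_quadForm hF hψ (ne_of_mem_erase hs) hι (-y),
      ← mul_sum]
    simp only [dotProduct_neg, neg_dotProduct, neg_neg, div_eq_mul_inv, mul_inv, ← mul_assoc]
    rw [sum_erase_zero_addChar_mul_inv hψ]
    simp [h4]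
  rw [hdetect, ← add_sum_erase _ _ (mem_univ 0), hzero, hnonzero]

end QuadraticGaussSum

section ZeroSphere

variable {F : Type*} [Field F] [Fintype F] [DecidableEq F] {ι : Type*} [Fintype ι]
  [DecidableEq ι] {ψ : AddChar F ℂ}

lemma zeroSphere_kernel_eq (hq : Fintype.card F % 4 = 3) (hψ : ψ ≠ 1) {k : ℕ}
    (hι : Fintype.card ι = 4 * k + 2) (y : ι → F) :
    (Fintype.card F : ℂ)⁻¹ -
        ((Fintype.card F : ℂ) ^ (2 * k + 2))⁻¹ * ((Fintype.card F : ℂ) - 1) *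
          ∑ x ∈ {x : ι → F | x ⬝ᵥ x = 0}, ψ (-(x ⬝ᵥ y)) +
        ((Fintype.card F : ℂ) ^ (2 * k + 2))⁻¹ *
          ∑ x ∈ {x : ι → F | x ⬝ᵥ x ≠ 0}, ψ (-(x ⬝ᵥ y)) =
      if y ⬝ᵥ y = 0 then 1 else 0 := by
  have hq0 : (Fintype.card F : ℂ) ≠ 0 := Nat.cast_ne_zero.mpr Fintype.card_ne_zero
  have hgauss : gaussSum (complexQuadraticChar F) ψ ^ Fintype.card ι =
      -(Fintype.card F : ℂ) ^ (2 * k + 1) := by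
    rw [hι, show 4 * k + 2 = 2 * (2 * k + 1) by ring, pow_mul,
      gaussSum_complexQuadraticChar_sq hq hψ, Odd.neg_pow ⟨k, rfl⟩]
  have hsphere := card_mul_sum_zeroSphere_addChar (ringChar_ne_two_of_card_mod_four_eq_three hq)
    hψ ⟨2 * k + 1, by omega⟩ y
  have htotal : ∑ x ∈ {x : ι → F | x ⬝ᵥ x = 0}, ψ (-(x ⬝ᵥ y)) +
      ∑ x ∈ {x : ι → F | x ⬝ᵥ x ≠ 0}, ψ (-(x ⬝ᵥ y)) =
        if y = 0 then (Fintype.card F : ℂ) ^ Fintype.card ι else 0 := by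
    rw [sum_filter_add_sum_filter_not]
    simp only [← dotProduct_neg, sum_addChar_dotProduct hψ, neg_eq_zero]
  rw [hgauss, hι] at hsphere
  rw [hι] at htotal
  rw [eq_sub_of_add_eq' htotal, (eq_inv_mul_iff_mul_eq₀ hq0).mpr hsphere]
  by_cases hy : y = 0
  · simp only [hy, dotProduct_zero, if_true]
    field_simp
    ring
  · by_cases hyy : y ⬝ᵥ y = 0 <;> simp only [hy, hyy, if_true, if_false] <;> field_simp <;> ring

lemma zeroSphere_fourier_sum_eq_card_pairs (hq : Fintype.card F % 4 = 3) (hψ : ψ ≠ 1) {k : ℕ}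
    (hι : Fintype.card ι = 4 * k + 2) (G : Finset (ι → F)) :
    (Fintype.card F : ℝ)⁻¹ * (#G : ℝ) ^ 2 -
        ((Fintype.card F : ℝ) ^ (2 * k + 2))⁻¹ * ((Fintype.card F : ℝ) - 1) *
          ∑ x ∈ {x : ι → F | x ⬝ᵥ x = 0}, ‖∑ m ∈ G, ψ (-(x ⬝ᵥ m))‖ ^ 2 +
        ((Fintype.card F : ℝ) ^ (2 * k + 2))⁻¹ *
          ∑ x ∈ {x : ι → F | x ⬝ᵥ x ≠ 0}, ‖∑ m ∈ G, ψ (-(x ⬝ᵥ m))‖ ^ 2 =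
      #{p ∈ G ×ˢ G | (p.1 - p.2) ⬝ᵥ (p.1 - p.2) = 0} := by
  apply Complex.ofReal_injective
  push_cast
  have hdiff (x : ι → F) (p : (ι → F) × (ι → F)) :
      -(x ⬝ᵥ p.1) - -(x ⬝ᵥ p.2) = -(x ⬝ᵥ (p.1 - p.2)) := by
    rw [dotProduct_sub]
    ring
  have hcard :
      (Fintype.card F : ℂ)⁻¹ * (#G : ℂ) ^ 2 = ∑ _p ∈ G ×ˢ G, (Fintype.card F : ℂ)⁻¹ := by
    rw [sum_const, card_product, nsmul_eq_mul]
    push_cast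
    ring
  simp only [AddChar.sq_norm_sum_eq_sum_product, hdiff]
  rw [sum_comm, sum_comm (s := {x : ι → F | x ⬝ᵥ x ≠ 0}), hcard, mul_sum, mul_sum,
    ← sum_sub_distrib, ← sum_add_distrib,
    sum_congr rfl fun p _ => zeroSphere_kernel_eq hq hψ hι _, sum_boole]

end ZeroSphere

theorem counting_identity_zero_sphere_general
    (F : Type) [Field F] [Fintype F] [DecidableEq F]
    (hq : Fintype.card F % 4 = 3)
    (χ : AddChar F ℂ) (hχ : χ ≠ 1) (k : ℕ)
    (G : Finset (Fin (4 * k + 2) → F)) :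
    ((Fintype.card F : ℝ))⁻¹ * (G.card : ℝ) ^ 2 -
        ((Fintype.card F : ℝ) ^ (2 * k + 2))⁻¹ * ((Fintype.card F : ℝ) - 1) *
          ∑ x ∈ Finset.univ.filter (fun x : Fin (4 * k + 2) → F => ∑ i, x i * x i = 0),
            ‖∑ m ∈ G, χ (-∑ i, x i * m i)‖ ^ 2 +
        ((Fintype.card F : ℝ) ^ (2 * k + 2))⁻¹ *
          ∑ x ∈ Finset.univ.filter (fun x : Fin (4 * k + 2) → F => ∑ i, x i * x i ≠ 0),
            ‖∑ m ∈ G, χ (-∑ i, x i * m i)‖ ^ 2 =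
      ((G ×ˢ G).filter
          (fun mm : (Fin (4 * k + 2) → F) × (Fin (4 * k + 2) → F) =>
            ∑ i, (mm.1 i - mm.2 i) * (mm.1 i - mm.2 i) = 0)).card ∧
    0 ≤ ((Fintype.card F : ℝ))⁻¹ * (G.card : ℝ) ^ 2 -
        ((Fintype.card F : ℝ) ^ (2 * k + 2))⁻¹ * ((Fintype.card F : ℝ) - 1) *
          ∑ x ∈ Finset.univ.filter (fun x : Fin (4 * k + 2) → F => ∑ i, x i * x i = 0),
            ‖∑ m ∈ G, χ (-∑ i, x i * m i)‖ ^ 2 +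
        ((Fintype.card F : ℝ) ^ (2 * k + 2))⁻¹ *
          ∑ x ∈ Finset.univ.filter (fun x : Fin (4 * k + 2) → F => ∑ i, x i * x i ≠ 0),
            ‖∑ m ∈ G, χ (-∑ i, x i * m i)‖ ^ 2 := by
  have hcount := zeroSphere_fourier_sum_eq_card_pairs hq hχ (Fintype.card_fin _) G
  exact ⟨hcount, (Nat.cast_nonneg _).trans_eq hcount.symm⟩

/-- For `d = 4k+2`, `k ≥ 1`, `q ≡ 3 mod 4`, and any `G ⊂ F_q^d`, the quantity
`q^{−1}|G|² − q^{−(d+2)/2}(q−1) Σ_{‖x‖=0} |1̂_G(x)|² + q^{−(d+2)/2} Σ_{‖x‖≠0} |1̂_G(x)|²`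
equals the number of pairs `(m, m') ∈ G × G` with `m − m' ∈ S_0`; in particular it is
nonnegative. -/
theorem counting_identity_zero_sphere
    (F : Type) [Field F] [Fintype F] [DecidableEq F]
    (hq : Fintype.card F % 4 = 3)
    (χ : AddChar F ℂ) (hχ : χ ≠ 1) (k : ℕ) (hk : 1 ≤ k)
    (G : Finset (Fin (4 * k + 2) → F)) :
    ((Fintype.card F : ℝ))⁻¹ * (G.card : ℝ) ^ 2 -
        ((Fintype.card F : ℝ) ^ (2 * k + 2))⁻¹ * ((Fintype.card F : ℝ) - 1) *
          ∑ x ∈ Finset.univ.filter (fun x : Fin (4 * k + 2) → F => ∑ i, x i * x i = 0),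
            ‖∑ m ∈ G, χ (-∑ i, x i * m i)‖ ^ 2 +
        ((Fintype.card F : ℝ) ^ (2 * k + 2))⁻¹ *
          ∑ x ∈ Finset.univ.filter (fun x : Fin (4 * k + 2) → F => ∑ i, x i * x i ≠ 0),
            ‖∑ m ∈ G, χ (-∑ i, x i * m i)‖ ^ 2 =
      ((G ×ˢ G).filter
          (fun mm : (Fin (4 * k + 2) → F) × (Fin (4 * k + 2) → F) =>
            ∑ i, (mm.1 i - mm.2 i) * (mm.1 i - mm.2 i) = 0)).card ∧
    0 ≤ ((Fintype.card F : ℝ))⁻¹ * (G.card : ℝ) ^ 2 -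
        ((Fintype.card F : ℝ) ^ (2 * k + 2))⁻¹ * ((Fintype.card F : ℝ) - 1) *
          ∑ x ∈ Finset.univ.filter (fun x : Fin (4 * k + 2) → F => ∑ i, x i * x i = 0),
            ‖∑ m ∈ G, χ (-∑ i, x i * m i)‖ ^ 2 +
        ((Fintype.card F : ℝ) ^ (2 * k + 2))⁻¹ *
          ∑ x ∈ Finset.univ.filter (fun x : Fin (4 * k + 2) → F => ∑ i, x i * x i ≠ 0),
            ‖∑ m ∈ G, χ (-∑ i, x i * m i)‖ ^ 2 :=
  counting_identity_zero_sphere_general F hq χ hχ k G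
end

section
/- Let d ≥ 4 be even, j ≠ 0, and A ⊂ S_j ⊂ F_q^d. Then the number of triples (x, y, z) ∈ A³ with x + y − z ∈ S_j is at least the number of quadruples (x, y, z, t) ∈ A⁴ with x + y = z + t. -/
open Finset

/-- For `A` a subset of the sphere `S_j` (`j ≠ 0`, `d ≥ 4` even), the number of triples
`(x,y,z) ∈ A³` with `x + y − z ∈ S_j` is at least the number of quadruples
`(x,y,z,t) ∈ A⁴` with `x + y = z + t`. -/
theorem energy_le_triples
    (F : Type) [Field F] [Fintype F] (hq : Odd (Fintype.card F))
    (d : ℕ) (hd4 : 4 ≤ d) (hd : Even d) (j : F) (hj : j ≠ 0)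
    (A : Finset (Fin d → F)) (hA : ∀ a ∈ A, ∑ i, a i * a i = j) :
    Set.ncard {v : (Fin d → F) × (Fin d → F) × (Fin d → F) × (Fin d → F) |
        v.1 ∈ A ∧ v.2.1 ∈ A ∧ v.2.2.1 ∈ A ∧ v.2.2.2 ∈ A ∧ v.1 + v.2.1 = v.2.2.1 + v.2.2.2} ≤
      Set.ncard {w : (Fin d → F) × (Fin d → F) × (Fin d → F) |
        w.1 ∈ A ∧ w.2.1 ∈ A ∧ w.2.2 ∈ A ∧
          ∑ i, (w.1 i + w.2.1 i - w.2.2 i) * (w.1 i + w.2.1 i - w.2.2 i) = j} := by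
  apply Set.ncard_le_ncard_of_injOn (fun v => (v.1, v.2.1, v.2.2.1))
  · rintro ⟨x, y, z, t⟩ ⟨hx, hy, hz, ht, heq⟩
    refine ⟨hx, hy, hz, ?_⟩
    have : ∀ i, x i + y i - z i = t i := by
      intro i
      have := congrFun heq i
      simp only [Pi.add_apply] at this
      linear_combination this
    simp only [this]
    exact hA t ht
  · rintro ⟨x, y, z, t⟩ ⟨hx, hy, hz, ht, heq⟩ ⟨x', y', z', t'⟩ ⟨hx', hy', hz', ht', heq'⟩ h
    simp only [Prod.mk.injEq] at h
    obtain ⟨h1, h2, h3⟩ := h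
    subst h1; subst h2; subst h3
    have : t = t' := by
      funext i
      have e1 := congrFun heq i
      have e2 := congrFun heq' i
      simp only [Pi.add_apply] at e1 e2
      linear_combination e2 - e1
    rw [this]
end

section
/- Suppose d is even and S_j = {x ∈ F_q^d : x_1² + ... + x_d² = j} with j ≠ 0. Then S_j contains an affine subspace of F_q^d of dimension (d−2)/2. -/
open Finset

section helpers

variable {F : Type} [Field F]

/-- A vector in `Fin d → F` supported at the (nat-indexed) coordinate `p` with value `A`. -/
def sgl (d : ℕ) (p : ℕ) (A : F) : Fin d → F := fun x => if (x : ℕ) = p then A else 0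

lemma sum_ite_coe {d p : ℕ} (hp : p < d) (A : F) :
    ∑ x : Fin d, (if (x : ℕ) = p then A else 0) = A := by
  rw [Finset.sum_eq_single (⟨p, hp⟩ : Fin d)]
  · simp
  · intro b _ hb
    have : (b : ℕ) ≠ p := fun h => hb (Fin.ext h)
    simp [this]
  · simp

lemma dot_sgl {d p q : ℕ} (hp : p < d) (A B : F) :
    ∑ x : Fin d, sgl d p A x * sgl d q B x = if p = q then A * B else 0 := by
  have h : ∀ x : Fin d, sgl d p A x * sgl d q B x
      = if (x : ℕ) = p then (if p = q then A * B else 0) else 0 := by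
    intro x
    unfold sgl
    by_cases hx : (x : ℕ) = p
    · by_cases hpq : p = q
      · simp [hx, hpq]
      · have : (x : ℕ) ≠ q := by omega
        simp [hx, hpq, this]
    · simp [hx]
  rw [Finset.sum_congr rfl (fun x _ => h x), sum_ite_coe hp]

lemma dot33 {d p1 p2 p3 q1 q2 q3 : ℕ} (h1 : p1 < d) (h2 : p2 < d) (h3 : p3 < d)
    (A1 A2 A3 B1 B2 B3 : F) :
    ∑ x : Fin d, (sgl d p1 A1 + sgl d p2 A2 + sgl d p3 A3) x
        * (sgl d q1 B1 + sgl d q2 B2 + sgl d q3 B3) x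
      = (if p1 = q1 then A1 * B1 else 0) + (if p1 = q2 then A1 * B2 else 0)
        + (if p1 = q3 then A1 * B3 else 0) + (if p2 = q1 then A2 * B1 else 0)
        + (if p2 = q2 then A2 * B2 else 0) + (if p2 = q3 then A2 * B3 else 0)
        + (if p3 = q1 then A3 * B1 else 0) + (if p3 = q2 then A3 * B2 else 0)
        + (if p3 = q3 then A3 * B3 else 0) := by
  simp only [Pi.add_apply, add_mul, mul_add, Finset.sum_add_distrib,
    dot_sgl h1, dot_sgl h2, dot_sgl h3]
  ring

lemma dot22 {d p1 p2 q1 q2 : ℕ} (h1 : p1 < d) (h2 : p2 < d) (A1 A2 B1 B2 : F) :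
    ∑ x : Fin d, (sgl d p1 A1 + sgl d p2 A2) x * (sgl d q1 B1 + sgl d q2 B2) x
      = (if p1 = q1 then A1 * B1 else 0) + (if p1 = q2 then A1 * B2 else 0)
        + (if p2 = q1 then A2 * B1 else 0) + (if p2 = q2 then A2 * B2 else 0) := by
  simp only [Pi.add_apply, add_mul, mul_add, Finset.sum_add_distrib, dot_sgl h1, dot_sgl h2]
  ring

lemma dot23 {d p1 p2 q1 q2 q3 : ℕ} (h1 : p1 < d) (h2 : p2 < d) (A1 A2 B1 B2 B3 : F) :
    ∑ x : Fin d, (sgl d p1 A1 + sgl d p2 A2) x * (sgl d q1 B1 + sgl d q2 B2 + sgl d q3 B3) x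
      = (if p1 = q1 then A1 * B1 else 0) + (if p1 = q2 then A1 * B2 else 0)
        + (if p1 = q3 then A1 * B3 else 0) + (if p2 = q1 then A2 * B1 else 0)
        + (if p2 = q2 then A2 * B2 else 0) + (if p2 = q3 then A2 * B3 else 0) := by
  simp only [Pi.add_apply, add_mul, mul_add, Finset.sum_add_distrib, dot_sgl h1, dot_sgl h2]
  ring

lemma ite_zero {p : Prop} [Decidable p] (h : ¬p) (c : F) :
    (if p then c else 0) = 0 := if_neg h

/-- dot product with a fixed vector on the left, as a linear map -/
def dotL (d : ℕ) (c : Fin d → F) : (Fin d → F) →ₗ[F] F where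
  toFun w := ∑ x, c x * w x
  map_add' u v := by simp [mul_add, Finset.sum_add_distrib]
  map_smul' r w := by
    simp only [Pi.smul_apply, smul_eq_mul, RingHom.id_apply, Finset.mul_sum]
    exact Finset.sum_congr rfl fun x _ => by ring

theorem main_lemma {F : Type} [Field F] {d : ℕ} {j : F} (ι : Type) [Fintype ι]
    (v : ι → Fin d → F) (a : Fin d → F)
    (hvv : ∀ k l, ∑ x, v k x * v l x = 0)
    (hav : ∀ k, ∑ x, a x * v k x = 0)
    (haa : ∑ x, a x * a x = j)
    (hind : LinearIndependent F v)
    (hcard : Fintype.card ι = (d - 2) / 2) :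
    ∃ (W : Submodule F (Fin d → F)) (b : Fin d → F),
      Module.finrank F W = (d - 2) / 2 ∧
        ∀ w ∈ W, ∑ i, (b i + w i) * (b i + w i) = j := by
  classical
  refine ⟨Submodule.span F (Set.range v), a, ?_, ?_⟩
  · rw [finrank_span_eq_card hind, hcard]
  · set W := Submodule.span F (Set.range v) with hW
    have hVmem : ∀ u ∈ W, ∀ k, ∑ x, v k x * u x = 0 := by
      intro u hu k
      have hle : W ≤ LinearMap.ker (dotL d (v k)) := by
        rw [hW, Submodule.span_le]
        rintro _ ⟨l, rfl⟩
        simpa [dotL, LinearMap.mem_ker] using hvv k l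
      simpa [dotL, LinearMap.mem_ker] using hle hu
    have hA : ∀ u ∈ W, ∑ x, a x * u x = 0 := by
      intro u hu
      have hle : W ≤ LinearMap.ker (dotL d a) := by
        rw [hW, Submodule.span_le]
        rintro _ ⟨l, rfl⟩
        simpa [dotL, LinearMap.mem_ker] using hav l
      simpa [dotL, LinearMap.mem_ker] using hle hu
    have hcross : ∀ u ∈ W, ∀ w ∈ W, ∑ x, w x * u x = 0 := by
      intro u hu w hw
      have hle : W ≤ LinearMap.ker (dotL d u) := by
        rw [hW, Submodule.span_le]
        rintro _ ⟨l, rfl⟩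
        have h0 := hVmem u hu l
        rw [SetLike.mem_coe, LinearMap.mem_ker]
        show ∑ x, u x * v l x = 0
        rw [← h0]
        exact Finset.sum_congr rfl fun x _ => mul_comm _ _
      have h1 : ∑ x, u x * w x = 0 := hle hw
      rw [← h1]
      exact Finset.sum_congr rfl fun x _ => mul_comm _ _
    have hQ : ∀ w ∈ W, ∑ x, w x * w x = 0 := by
      intro w hw
      induction hw using Submodule.span_induction with
      | mem x hx => rcases hx with ⟨k, rfl⟩; exact hvv k k
      | zero => simp
      | add x y hx hy ihx ihy =>
          have expand : ∀ i : Fin d, (x + y) i * (x + y) i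
              = x i * x i + (x i * y i + (y i * x i + y i * y i)) := by
            intro i; simp [Pi.add_apply]; ring
          rw [Finset.sum_congr rfl (fun i _ => expand i)]
          rw [Finset.sum_add_distrib, Finset.sum_add_distrib, Finset.sum_add_distrib]
          rw [ihx, ihy, hcross y hy x hx, hcross x hx y hy]
          ring
      | smul r x hx ih =>
          have expand : ∀ i : Fin d, (r • x) i * (r • x) i = r * r * (x i * x i) := by
            intro i; simp [Pi.smul_apply, smul_eq_mul]; ring
          rw [Finset.sum_congr rfl (fun i _ => expand i), ← Finset.mul_sum, ih, mul_zero]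
    intro w hw
    have expand : ∀ i : Fin d, (a i + w i) * (a i + w i)
        = a i * a i + (a i * w i + (w i * a i + w i * w i)) := by
      intro i; ring
    rw [Finset.sum_congr rfl (fun i _ => expand i)]
    rw [Finset.sum_add_distrib, Finset.sum_add_distrib, Finset.sum_add_distrib]
    have hwa : ∑ x, w x * a x = 0 := by
      rw [← hA w hw]
      exact Finset.sum_congr rfl fun x _ => mul_comm _ _
    rw [haa, hA w hw, hwa, hQ w hw]
    ring

/-- The pair of isotropic, mutually orthogonal block vectors in the `r`-th block of
four coordinates, built from `s t` with `s² + t² = -1`. -/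
def bv (d : ℕ) (s t : F) (r : ℕ) : ℕ → Fin d → F
  | 0 => sgl d (4*r) 1 + sgl d (4*r+2) s + sgl d (4*r+3) t
  | _+1 => sgl d (4*r+1) 1 + sgl d (4*r+2) (-t) + sgl d (4*r+3) s

lemma bv_dot {d : ℕ} {s t : F} (hst : s * s + t * t = -1) {r r' : ℕ} (i i' : ℕ)
    (h : 4*r+3 < d) (h' : 4*r'+3 < d) :
    ∑ x, bv d s t r i x * bv d s t r' i' x = 0 := by
  rcases eq_or_ne r r' with rfl | hne
  · rcases i with _ | i <;> rcases i' with _ | i' <;>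
      · simp only [bv]
        rw [dot33 (by omega) (by omega) (by omega)]
        simp
        first | linear_combination hst | ring1
  · rcases i with _ | i <;> rcases i' with _ | i' <;>
      · simp only [bv]
        rw [dot33 (by omega) (by omega) (by omega)]
        iterate 9 rw [ite_zero (by omega)]
        ring

/-- Every element of a finite field of odd cardinality is a sum of two squares. -/
lemma exists_sq_add_sq (F : Type) [Field F] [Fintype F] (hq : Odd (Fintype.card F)) (x : F) :
    ∃ a b : F, a * a + b * b = x := by
  obtain ⟨a, b, hab⟩ := FiniteField.exists_root_sum_quadratic
    (f := Polynomial.X ^ 2) (g := Polynomial.X ^ 2 - Polynomial.C x)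
    (Polynomial.degree_X_pow 2) (Polynomial.degree_X_pow_sub_C (by norm_num) x)
    (Nat.odd_iff.mp hq)
  refine ⟨a, b, ?_⟩
  have h : a ^ 2 + (b ^ 2 - x) = 0 := by simpa using hab
  linear_combination h

end helpers

/-- For `d ≥ 4` even and `j ≠ 0`, the sphere `S_j ⊂ F_q^d` contains an affine subspace
of dimension `(d−2)/2`. -/
theorem sphere_contains_affine_subspace
    (F : Type) [Field F] [Fintype F] (hq : Odd (Fintype.card F))
    (d : ℕ) (hd4 : 4 ≤ d) (hd : Even d) (j : F) (hj : j ≠ 0) :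
    ∃ (W : Submodule F (Fin d → F)) (a : Fin d → F),
      Module.finrank F W = (d - 2) / 2 ∧
        ∀ w ∈ W, ∑ i, (a i + w i) * (a i + w i) = j := by
  classical
  obtain ⟨m, hm⟩ := hd
  obtain ⟨s, t, hst⟩ := exists_sq_add_sq F hq (-1)
  rcases Nat.even_or_odd m with hme | hmo
  · -- m even : d = 4*K+4
    obtain ⟨K0, hK0⟩ := hme
    obtain ⟨K, hdK⟩ : ∃ K, d = 4*K + 4 := ⟨K0 - 1, by omega⟩
    have h2 : (2 : F) ≠ 0 := by
      refine Ring.two_ne_zero fun hc => ?_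
      have := FiniteField.even_card_iff_char_two.mp hc
      have := Nat.odd_iff.mp hq
      omega
    set y : F := (j+1)/2 with hy
    set z : F := -(t*(j-1)/2) with hz
    set w : F := s*(j-1)/2 with hwdef
    set a : Fin d → F := sgl d (4*K+1) y + sgl d (4*K+2) z + sgl d (4*K+3) w with ha
    set vst : Fin d → F := sgl d (4*K) 1 + sgl d (4*K+2) s + sgl d (4*K+3) t with hvst
    set v : (Fin K × Fin 2) ⊕ Unit → Fin d → F := fun k =>
      Sum.elim (fun p : Fin K × Fin 2 => bv d s t p.1 p.2.val) (fun _ => vst) k with hv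
    have hvv : ∀ k l, ∑ x, v k x * v l x = 0 := by
      rintro (⟨r, i⟩ | _) (⟨r', i'⟩ | _)
      · exact bv_dot hst _ _ (by have := r.isLt; omega) (by have := r'.isLt; omega)
      · -- bv · vst
        have hr := r.isLt
        simp only [hv, Sum.elim_inl, Sum.elim_inr, hvst]
        rcases (i : ℕ).eq_zero_or_pos with hi | hi
        · rw [hi]
          simp only [bv]
          rw [dot33 (by omega) (by omega) (by omega)]
          iterate 9 rw [ite_zero (by omega)]
          ring
        · obtain ⟨i0, hi0⟩ : ∃ i0, (i : ℕ) = i0 + 1 := ⟨(i:ℕ)-1, by omega⟩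
          rw [hi0]
          simp only [bv]
          rw [dot33 (by omega) (by omega) (by omega)]
          iterate 9 rw [ite_zero (by omega)]
          ring
      · -- vst · bv
        have hr := r'.isLt
        simp only [hv, Sum.elim_inl, Sum.elim_inr, hvst]
        rcases (i' : ℕ).eq_zero_or_pos with hi | hi
        · rw [hi]
          simp only [bv]
          rw [dot33 (by omega) (by omega) (by omega)]
          iterate 9 rw [ite_zero (by omega)]
          ring
        · obtain ⟨i0, hi0⟩ : ∃ i0, (i' : ℕ) = i0 + 1 := ⟨(i':ℕ)-1, by omega⟩
          rw [hi0]
          simp only [bv]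
          rw [dot33 (by omega) (by omega) (by omega)]
          iterate 9 rw [ite_zero (by omega)]
          ring
      · -- vst · vst
        simp only [hv, Sum.elim_inr, hvst]
        rw [dot33 (by omega) (by omega) (by omega)]
        rw [if_pos rfl]
        rw [ite_zero (by omega), ite_zero (by omega), ite_zero (by omega)]
        rw [if_pos rfl]
        rw [ite_zero (by omega), ite_zero (by omega), ite_zero (by omega)]
        rw [if_pos rfl]
        linear_combination hst
    have hav : ∀ k, ∑ x, a x * v k x = 0 := by
      rintro (⟨r, i⟩ | _)
      · have hr := r.isLt
        simp only [hv, Sum.elim_inl, ha]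
        rcases (i : ℕ).eq_zero_or_pos with hi | hi
        · rw [hi]
          simp only [bv]
          rw [dot33 (by omega) (by omega) (by omega)]
          iterate 9 rw [ite_zero (by omega)]
          ring
        · obtain ⟨i0, hi0⟩ : ∃ i0, (i : ℕ) = i0 + 1 := ⟨(i:ℕ)-1, by omega⟩
          rw [hi0]
          simp only [bv]
          rw [dot33 (by omega) (by omega) (by omega)]
          iterate 9 rw [ite_zero (by omega)]
          ring
      · simp only [hv, Sum.elim_inr, ha, hvst]
        rw [dot33 (by omega) (by omega) (by omega)]
        rw [ite_zero (by omega), ite_zero (by omega), ite_zero (by omega),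
          ite_zero (by omega)]
        rw [if_pos rfl]
        rw [ite_zero (by omega), ite_zero (by omega), ite_zero (by omega)]
        rw [if_pos rfl]
        rw [hz, hwdef]
        field_simp
        ring
    have haa : ∑ x, a x * a x = j := by
      simp only [ha]
      rw [dot33 (by omega) (by omega) (by omega)]
      rw [if_pos rfl]
      rw [ite_zero (by omega), ite_zero (by omega), ite_zero (by omega)]
      rw [if_pos rfl]
      rw [ite_zero (by omega), ite_zero (by omega), ite_zero (by omega)]
      rw [if_pos rfl]
      rw [hy, hz, hwdef]
      field_simp
      linear_combination (j-1)*(j-1)*hst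
    have hind : LinearIndependent F v := by
      set coord : (Fin K × Fin 2) ⊕ Unit → Fin d := fun k =>
        Sum.elim (fun p : Fin K × Fin 2 =>
          (⟨4*p.1.val + p.2.val, by have := p.1.isLt; have := p.2.isLt; omega⟩ : Fin d))
          (fun _ => (⟨4*K, by omega⟩ : Fin d)) k with hcoord
      apply LinearIndependent.of_comp
        ((LinearMap.pi (fun k : (Fin K × Fin 2) ⊕ Unit => LinearMap.proj (coord k))) :
          (Fin d → F) →ₗ[F] ((Fin K × Fin 2) ⊕ Unit → F))
      have heq : (⇑((LinearMap.pi fun k : (Fin K × Fin 2) ⊕ Unit => LinearMap.proj (coord k)) :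
            (Fin d → F) →ₗ[F] ((Fin K × Fin 2) ⊕ Unit → F)) ∘ v)
          = ⇑(Pi.basisFun F ((Fin K × Fin 2) ⊕ Unit)) := by
        funext k
        funext k'
        simp only [Function.comp_apply, LinearMap.pi_apply, LinearMap.proj_apply,
          Pi.basisFun_apply, Pi.single_apply]
        rcases k with ⟨r, i⟩ | ⟨⟩ <;> rcases k' with ⟨r', i'⟩ | ⟨⟩
        · have hr := r.isLt; have hr' := r'.isLt
          have hi := i.isLt; have hi' := i'.isLt
          simp only [hv, Sum.elim_inl, Sum.elim_inr, hcoord]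
          rcases (i : ℕ).eq_zero_or_pos with h0 | h0
          · rw [h0]
            simp only [bv, Pi.add_apply, sgl, Sum.inl.injEq, Prod.mk.injEq, Fin.ext_iff]
            split_ifs <;> first | ring1 | (exfalso; omega)
          · obtain ⟨i0, hi0⟩ : ∃ i0, (i : ℕ) = i0 + 1 := ⟨(i:ℕ)-1, by omega⟩
            rw [hi0]
            simp only [bv, Pi.add_apply, sgl, Sum.inl.injEq, Prod.mk.injEq, Fin.ext_iff]
            split_ifs <;> first | ring1 | (exfalso; omega)
        · have hr := r.isLt; have hi := i.isLt
          simp only [hv, Sum.elim_inl, Sum.elim_inr, hcoord]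
          rcases (i : ℕ).eq_zero_or_pos with h0 | h0
          · rw [h0]
            simp only [bv, Pi.add_apply, sgl, reduceCtorEq, if_false]
            split_ifs <;> first | ring1 | (exfalso; omega)
          · obtain ⟨i0, hi0⟩ : ∃ i0, (i : ℕ) = i0 + 1 := ⟨(i:ℕ)-1, by omega⟩
            rw [hi0]
            simp only [bv, Pi.add_apply, sgl, reduceCtorEq, if_false]
            split_ifs <;> first | ring1 | (exfalso; omega)
        · have hr' := r'.isLt; have hi' := i'.isLt
          simp only [hv, Sum.elim_inl, Sum.elim_inr, hcoord, hvst, Pi.add_apply, sgl, reduceCtorEq, if_false]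
          split_ifs <;> first | ring1 | (exfalso; omega)
        · simp only [hv, Sum.elim_inl, Sum.elim_inr, hcoord, hvst, Pi.add_apply, sgl]
          split_ifs <;> first | ring1 | (exfalso; omega)
      rw [heq]
      exact (Pi.basisFun F ((Fin K × Fin 2) ⊕ Unit)).linearIndependent
    have hcard : Fintype.card ((Fin K × Fin 2) ⊕ Unit) = (d - 2) / 2 := by
      simp only [Fintype.card_sum, Fintype.card_prod, Fintype.card_fin, Fintype.card_unit]
      omega
    exact main_lemma _ v a hvv hav haa hind hcard
  · -- m odd : d = 4*K+2, K ≥ 1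
    obtain ⟨K, hK⟩ : ∃ K, m = 2*K+1 := hmo
    have hdK : d = 4*K + 2 := by omega
    have hK1 : 1 ≤ K := by omega
    obtain ⟨α, β, hab⟩ := exists_sq_add_sq F hq j
    set a : Fin d → F := sgl d (4*K) α + sgl d (4*K+1) β with ha
    set v : Fin K × Fin 2 → Fin d → F := fun p => bv d s t p.1 p.2.val with hv
    have hvv : ∀ k l, ∑ x, v k x * v l x = 0 := by
      rintro ⟨r, i⟩ ⟨r', i'⟩
      exact bv_dot hst _ _ (by have := r.isLt; omega) (by have := r'.isLt; omega)
    have hav : ∀ k, ∑ x, a x * v k x = 0 := by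
      rintro ⟨r, i⟩
      have hr := r.isLt
      simp only [hv, ha]
      rcases (i : ℕ).eq_zero_or_pos with hi | hi
      · rw [hi]
        simp only [bv]
        rw [dot23 (by omega) (by omega)]
        iterate 6 rw [ite_zero (by omega)]
        ring
      · obtain ⟨i0, hi0⟩ : ∃ i0, (i : ℕ) = i0 + 1 := ⟨(i:ℕ)-1, by omega⟩
        rw [hi0]
        simp only [bv]
        rw [dot23 (by omega) (by omega)]
        iterate 6 rw [ite_zero (by omega)]
        ring
    have haa : ∑ x, a x * a x = j := by
      simp only [ha]
      rw [dot22 (by omega) (by omega)]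
      rw [if_pos rfl]
      rw [ite_zero (by omega), ite_zero (by omega)]
      rw [if_pos rfl]
      linear_combination hab
    have hind : LinearIndependent F v := by
      set coord : Fin K × Fin 2 → Fin d := fun p =>
        (⟨4*p.1.val + p.2.val, by have := p.1.isLt; have := p.2.isLt; omega⟩ : Fin d) with hcoord
      apply LinearIndependent.of_comp
        ((LinearMap.pi (fun k : Fin K × Fin 2 => LinearMap.proj (coord k))) :
          (Fin d → F) →ₗ[F] (Fin K × Fin 2 → F))
      have heq : (⇑((LinearMap.pi fun k : Fin K × Fin 2 => LinearMap.proj (coord k)) :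
            (Fin d → F) →ₗ[F] (Fin K × Fin 2 → F)) ∘ v)
          = ⇑(Pi.basisFun F (Fin K × Fin 2)) := by
        funext k
        funext k'
        obtain ⟨r, i⟩ := k
        obtain ⟨r', i'⟩ := k'
        have hr := r.isLt; have hr' := r'.isLt
        have hi := i.isLt; have hi' := i'.isLt
        simp only [Function.comp_apply, LinearMap.pi_apply, LinearMap.proj_apply,
          Pi.basisFun_apply, Pi.single_apply, hv, hcoord]
        rcases (i : ℕ).eq_zero_or_pos with h0 | h0
        · rw [h0]
          simp only [bv, Pi.add_apply, sgl, Prod.mk.injEq, Fin.ext_iff]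
          split_ifs <;> first | ring1 | (exfalso; omega)
        · obtain ⟨i0, hi0⟩ : ∃ i0, (i : ℕ) = i0 + 1 := ⟨(i:ℕ)-1, by omega⟩
          rw [hi0]
          simp only [bv, Pi.add_apply, sgl, Prod.mk.injEq, Fin.ext_iff]
          split_ifs <;> first | ring1 | (exfalso; omega)
      rw [heq]
      exact (Pi.basisFun F (Fin K × Fin 2)).linearIndependent
    have hcard : Fintype.card (Fin K × Fin 2) = (d - 2) / 2 := by
      simp only [Fintype.card_prod, Fintype.card_fin]
      omega
    exact main_lemma _ v a hvv hav haa hind hcard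
end
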